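/- Unbiased-strategy factorization for Call-by-Name: for all λ-terms M and N, if M →β* N then there exists a term U with M ⊳* U and U ⋫* N (where * denotes reflexive-transitive closure). -/

import Mathlib

/-!
A reduction `M →β* N` first factors as head steps followed by steps that are not head steps
(Takahashi's parallel reduction method). The only subtlety is that contracting a non-head redex
can produce the same term as the head step: this happens exactly for `I (I c) → I c`, and such
steps are absorbed into the head part.

If the term `U` reached by the head steps still has a head redex, so does every term after it,
and on such terms a `⊳`-step is just a head step, so all later steps are `⋫`-steps. Otherwise
`U` is an abstraction or a neutral term `x U₁ ⋯ Uₙ`; its reducts keep that shape and its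
`⊳`-steps are those of its components, so induction on `N` concludes.
-/

/-- Untyped λ-terms in de Bruijn representation. -/
inductive Tm : Type
  | var : ℕ → Tm
  | lam : Tm → Tm
  | app : Tm → Tm → Tm
deriving DecidableEq

namespace Tm

/-- Lift (shift by one) the free variables of index `≥ d`. -/
def lift (d : ℕ) : Tm → Tm
  | var n => if n < d then var n else var (n + 1)
  | lam M => lam (lift (d + 1) M)
  | app M N => app (lift d M) (lift d N)

/-- Capture-avoiding substitution `M[N/k]` of `N` for the free variable `k` in `M`. -/
def subst : Tm → ℕ → Tm → Tm
  | var n, k, N => if n = k then N else if k < n then var (n - 1) else var n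
  | lam M, k, N => lam (subst M (k + 1) (lift 0 N))
  | app M₁ M₂, k, N => app (subst M₁ k N) (subst M₂ k N)

end Tm

/-- β-reduction: the closure of the root rule `(λx.M)N ↦β M[N/x]` under arbitrary contexts. -/
inductive Beta : Tm → Tm → Prop
  | beta (M N : Tm) : Beta (Tm.app (Tm.lam M) N) (M.subst 0 N)
  | lam {M M'} : Beta M M' → Beta (Tm.lam M) (Tm.lam M')
  | appL {M M' N} : Beta M M' → Beta (Tm.app M N) (Tm.app M' N)
  | appR {M N N'} : Beta N N' → Beta (Tm.app M N) (Tm.app M N')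

/-- Head reduction: the closure of `↦β` under head contexts `H ::= ⟨⟩ | λx.H | H M`. -/
inductive Head : Tm → Tm → Prop
  | beta (M N : Tm) : Head (Tm.app (Tm.lam M) N) (M.subst 0 N)
  | lam {M M'} : Head M M' → Head (Tm.lam M) (Tm.lam M')
  | appL {M M' N} : Head M M' → Head (Tm.app M N) (Tm.app M' N)

/-- The unbiased strategy `⊳`: perform head steps as long as possible; once the term has
no head redex, iterate in the subterms (in arbitrary order). -/
inductive Unb : Tm → Tm → Prop
  | head {M M'} : Head M M' → Unb M M'
  | lam {P P'} : (∀ s, ¬ Head (Tm.lam P) s) → Unb P P' → Unb (Tm.lam P) (Tm.lam P')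
  | appL {P P' Q} : (∀ s, ¬ Head (Tm.app P Q) s) → Unb P P' →
      Unb (Tm.app P Q) (Tm.app P' Q)
  | appR {P Q Q'} : (∀ s, ¬ Head (Tm.app P Q) s) → Unb Q Q' →
      Unb (Tm.app P Q) (Tm.app P Q')

open Relation
open Tm (var lam app)

theorem Relation.ReflTransGen.lift_of_ne {α β : Type*} {r : α → α → Prop} {p : β → β → Prop}
    (f : α → β) (h : ∀ a b, r a b → a ≠ b → p (f a) (f b)) {a b : α}
    (hab : ReflTransGen r a b) : ReflTransGen p (f a) (f b) := by
  refine ReflTransGen.lift' f (fun x y hxy => ?_) a b hab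
  by_cases hne : x = y
  · exact hne ▸ .refl
  · exact .single (h x y hxy hne)

theorem Relation.ReflTransGen.lift_of_ne_of_invariant {α β : Type*} {r : α → α → Prop}
    {p : β → β → Prop} {P : α → Prop} (f : α → β) (hP : ∀ a b, r a b → P a → P b)
    (h : ∀ a b, r a b → P a → a ≠ b → p (f a) (f b)) {a b : α} (hab : ReflTransGen r a b)
    (ha : P a) : ReflTransGen p (f a) (f b) := by
  induction hab using ReflTransGen.head_induction_on with
  | refl => exact .refl
  | @head a c hac _ ih =>
    by_cases hne : a = c
    · exact hne ▸ ih (hne ▸ ha)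
    · exact .head (h a c hac ha hne) (ih (hP a c hac ha))

namespace Tm

theorem lift_lift (M : Tm) {d e : ℕ} (h : d ≤ e) :
    (M.lift e).lift d = (M.lift d).lift (e + 1) := by
  induction M generalizing d e with
  | var n => grind [lift]
  | lam M ih => simp only [lift, ih (Nat.succ_le_succ h)]
  | app M N ihM ihN => simp only [lift, ihM h, ihN h]

theorem lift_subst_of_le (M : Tm) {d k : ℕ} (N : Tm) (h : d ≤ k) :
    (M.subst k N).lift d = (M.lift d).subst (k + 1) (N.lift d) := by
  induction M generalizing d k N with
  | var n => grind [lift, subst]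
  | lam M ih => simp only [subst, lift, ih _ (Nat.succ_le_succ h), lift_lift N (Nat.zero_le d)]
  | app M₁ M₂ ih₁ ih₂ => simp only [subst, lift, ih₁ N h, ih₂ N h]

theorem lift_subst_of_ge (M : Tm) {d k : ℕ} (N : Tm) (h : k ≤ d) :
    (M.subst k N).lift d = (M.lift (d + 1)).subst k (N.lift d) := by
  induction M generalizing d k N with
  | var n => grind [lift, subst]
  | lam M ih => simp only [subst, lift, ih _ (Nat.succ_le_succ h), lift_lift N (Nat.zero_le d)]
  | app M₁ M₂ ih₁ ih₂ => simp only [subst, lift, ih₁ N h, ih₂ N h]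

theorem subst_lift_self (M : Tm) (k : ℕ) (N : Tm) : (M.lift k).subst k N = M := by
  induction M generalizing k N with
  | var n => grind [lift, subst]
  | lam M ih => simp only [lift, subst, ih]
  | app M₁ M₂ ih₁ ih₂ => simp only [lift, subst, ih₁, ih₂]

theorem subst_subst (A : Tm) {i j : ℕ} (B N : Tm) (h : i ≤ j) :
    (A.subst i B).subst j N = (A.subst (j + 1) (N.lift i)).subst i (B.subst j N) := by
  induction A generalizing i j B N with
  | var n => grind [subst, subst_lift_self]
  | lam A ih =>
    simp only [subst, ih _ _ (Nat.succ_le_succ h), lift_subst_of_le B N (Nat.zero_le j),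
      lift_lift N (Nat.zero_le i)]
  | app A₁ A₂ ih₁ ih₂ => simp only [subst, ih₁ B N h, ih₂ B N h]

end Tm

theorem Head.toBeta {M N : Tm} (h : Head M N) : Beta M N := by
  induction h with
  | beta M N => exact Beta.beta M N
  | lam _ ih => exact Beta.lam ih
  | appL _ ih => exact Beta.appL ih

theorem Head.lift {M N : Tm} (h : Head M N) (d : ℕ) : Head (M.lift d) (N.lift d) := by
  induction h generalizing d with
  | beta M N =>
    simpa only [Tm.lift, Tm.lift_subst_of_ge M N (Nat.zero_le d)] using
      Head.beta (M.lift (d + 1)) (N.lift d)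
  | lam _ ih => exact Head.lam (ih (d + 1))
  | appL _ ih => exact Head.appL (ih d)

theorem Head.subst {M M' : Tm} (h : Head M M') (k : ℕ) (N : Tm) :
    Head (M.subst k N) (M'.subst k N) := by
  induction h generalizing k N with
  | beta M C =>
    simpa only [Tm.subst, Tm.subst_subst M C N (Nat.zero_le k)] using
      Head.beta (M.subst (k + 1) (N.lift 0)) (C.subst k N)
  | lam _ ih => exact Head.lam (ih (k + 1) _)
  | appL _ ih => exact Head.appL (ih k N)

theorem Beta.not_var {n : ℕ} {t : Tm} : ¬ Beta (.var n) t := nofun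

theorem Head.not_var {n : ℕ} {t : Tm} : ¬ Head (.var n) t := nofun

theorem Beta.lam_inv {a t : Tm} (h : Beta (.lam a) t) : ∃ b, t = .lam b ∧ Beta a b := by
  cases h with
  | lam h => exact ⟨_, rfl, h⟩

theorem Head.lam_inv {a t : Tm} (h : Head (.lam a) t) : ∃ b, t = .lam b ∧ Head a b := by
  cases h with
  | lam h => exact ⟨_, rfl, h⟩

theorem Beta.app_inv {f a t : Tm} (h : Beta (.app f a) t) :
    (∃ B, f = .lam B ∧ t = B.subst 0 a) ∨ (∃ f', t = .app f' a ∧ Beta f f') ∨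
      (∃ a', t = .app f a' ∧ Beta a a') := by
  cases h with
  | beta B _ => exact .inl ⟨B, rfl, rfl⟩
  | appL h => exact .inr (.inl ⟨_, rfl, h⟩)
  | appR h => exact .inr (.inr ⟨_, rfl, h⟩)

theorem Head.app_inv {f a t : Tm} (h : Head (.app f a) t) :
    (∃ B, f = .lam B ∧ t = B.subst 0 a) ∨ (∃ f', t = .app f' a ∧ Head f f') := by
  cases h with
  | beta B _ => exact .inl ⟨B, rfl, rfl⟩
  | appL h => exact .inr ⟨_, rfl, h⟩

inductive Par : Tm → Tm → Prop
  | var (n : ℕ) : Par (var n) (var n)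
  | lam {M M'} : Par M M' → Par (lam M) (lam M')
  | app {M M' N N'} : Par M M' → Par N N' → Par (app M N) (app M' N')
  | beta {M M' N N'} : Par M M' → Par N N' → Par (app (lam M) N) (M'.subst 0 N')

inductive ParInt : Tm → Tm → Prop
  | var (n : ℕ) : ParInt (var n) (var n)
  | lam {M M'} : ParInt M M' → ParInt (lam M) (lam M')
  | app {M M' N N'} : ParInt M M' → Par N N' → ParInt (app M N) (app M' N')

theorem Par.refl : ∀ M : Tm, Par M M
  | .var n => .var n
  | .lam M => .lam (Par.refl M)
  | .app M N => .app (Par.refl M) (Par.refl N)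

theorem ParInt.refl : ∀ M : Tm, ParInt M M
  | .var n => .var n
  | .lam M => .lam (ParInt.refl M)
  | .app M N => .app (ParInt.refl M) (Par.refl N)

theorem ParInt.toPar {M N : Tm} (h : ParInt M N) : Par M N := by
  induction h with
  | var n => exact .var n
  | lam _ ih => exact .lam ih
  | app _ hN ih => exact .app ih hN

theorem Beta.toPar {M N : Tm} (h : Beta M N) : Par M N := by
  induction h with
  | beta M N => exact .beta (.refl M) (.refl N)
  | lam _ ih => exact .lam ih
  | appL _ ih => exact .app ih (.refl _)
  | appR _ ih => exact .app (.refl _) ih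

theorem Par.lift {M N : Tm} (h : Par M N) (d : ℕ) : Par (M.lift d) (N.lift d) := by
  induction h generalizing d with
  | var n => simp only [Tm.lift]; split_ifs <;> exact .var _
  | lam _ ih => exact .lam (ih (d + 1))
  | app _ _ ihM ihN => exact .app (ihM d) (ihN d)
  | @beta M M' N N' _ _ ihM ihN =>
    simpa only [Tm.lift, Tm.lift_subst_of_ge M' N' (Nat.zero_le d)] using
      Par.beta (ihM (d + 1)) (ihN d)

theorem ParInt.lift {M N : Tm} (h : ParInt M N) (d : ℕ) : ParInt (M.lift d) (N.lift d) := by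
  induction h generalizing d with
  | var n => simp only [Tm.lift]; split_ifs <;> exact .var _
  | lam _ ih => exact .lam (ih (d + 1))
  | app _ hN ih => exact .app (ih d) (hN.lift d)

theorem Par.subst {M M' : Tm} (h : Par M M') (k : ℕ) {N N' : Tm} (hN : Par N N') :
    Par (M.subst k N) (M'.subst k N') := by
  induction h generalizing k N N' with
  | var n => simp only [Tm.subst]; split_ifs <;> first | exact hN | exact .var _
  | lam _ ih => exact .lam (ih (k + 1) (hN.lift 0))
  | app _ _ ihM ihN => exact .app (ihM k hN) (ihN k hN)
  | @beta M M' C C' _ _ ihM ihC =>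
    simpa only [Tm.subst, Tm.subst_subst M' C' N' (Nat.zero_le k)] using
      Par.beta (ihM (k + 1) (hN.lift 0)) (ihC k hN)

theorem ParInt.par_of_head {M N P : Tm} (hi : ParInt M N) (hh : Head N P) : Par M P := by
  induction hh generalizing M with
  | beta => cases hi with | app hM hN => cases hM with | lam hM => exact .beta hM.toPar hN
  | lam _ ih => cases hi with | lam h => exact .lam (ih h)
  | appL _ ih => cases hi with | app hM hN => exact .app (ih hM) hN

theorem ParInt.subst_exists_head_parInt {P P' : Tm} (hP : ParInt P P') (k : ℕ) {N N' Q : Tm}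
    (hN : Par N N') (hNQ : ReflTransGen Head N Q) (hQ : ParInt Q N') :
    ∃ R, ReflTransGen Head (P.subst k N) R ∧ ParInt R (P'.subst k N') := by
  induction hP generalizing k N N' Q with
  | var n =>
    simp only [Tm.subst]
    split_ifs
    · exact ⟨Q, hNQ, hQ⟩
    · exact ⟨_, .refl, .var _⟩
    · exact ⟨_, .refl, .var _⟩
  | lam _ ih =>
    obtain ⟨R, hR, hR'⟩ := ih (k + 1) (hN.lift 0)
      (ReflTransGen.lift _ (fun _ _ h => h.lift 0) _ _ hNQ) (hQ.lift 0)
    exact ⟨.lam R, ReflTransGen.lift Tm.lam (fun _ _ => Head.lam) _ _ hR, .lam hR'⟩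
  | @app _ _ B _ _ hB ih =>
    obtain ⟨R, hR, hR'⟩ := ih k hN hNQ hQ
    exact ⟨.app R (B.subst k N), ReflTransGen.lift (Tm.app · _) (fun _ _ => Head.appL) _ _ hR,
      .app hR' (hB.subst k hN)⟩

theorem Par.exists_head_parInt {M N : Tm} (h : Par M N) :
    ∃ P, ReflTransGen Head M P ∧ ParInt P N := by
  induction h with
  | var n => exact ⟨.var n, .refl, .var n⟩
  | lam _ ih =>
    obtain ⟨P, hP, hP'⟩ := ih
    exact ⟨.lam P, ReflTransGen.lift Tm.lam (fun _ _ => Head.lam) _ _ hP, .lam hP'⟩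
  | @app _ _ N _ _ hN ih _ =>
    obtain ⟨P, hP, hP'⟩ := ih
    exact ⟨.app P N, ReflTransGen.lift (Tm.app · N) (fun _ _ => Head.appL) _ _ hP, .app hP' hN⟩
  | @beta M _ N _ _ hN ihM ihN =>
    obtain ⟨P, hMP, hP⟩ := ihM
    obtain ⟨Q, hNQ, hQ⟩ := ihN
    obtain ⟨R, hR, hR'⟩ := hP.subst_exists_head_parInt 0 hN hNQ hQ
    have hMP' : ReflTransGen Head (M.subst 0 N) (P.subst 0 N) :=
      ReflTransGen.lift (·.subst 0 N) (fun _ _ h => h.subst 0 N) _ _ hMP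
    exact ⟨R, .head (.beta M N) (hMP'.trans hR), hR'⟩

theorem ParInt.postpone_head {X Y Z : Tm} (hXY : ParInt X Y) (hYZ : ReflTransGen Head Y Z) :
    ∃ W, ReflTransGen Head X W ∧ ParInt W Z := by
  induction hYZ using ReflTransGen.head_induction_on generalizing X with
  | refl => exact ⟨X, .refl, hXY⟩
  | head hY _ ih =>
    obtain ⟨S, hXS, hS⟩ := (hXY.par_of_head hY).exists_head_parInt
    obtain ⟨W, hSW, hW⟩ := ih hS
    exact ⟨W, hXS.trans hSW, hW⟩

theorem rtg_parInt_postpone_head {X Y Z : Tm} (hXY : ReflTransGen ParInt X Y)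
    (hYZ : ReflTransGen Head Y Z) :
    ∃ W, ReflTransGen Head X W ∧ ReflTransGen ParInt W Z := by
  induction hXY generalizing Z with
  | refl => exact ⟨Z, hYZ, .refl⟩
  | tail _ hY ih =>
    obtain ⟨V, hV, hVZ⟩ := hY.postpone_head hYZ
    obtain ⟨W, hW, hWV⟩ := ih hV
    exact ⟨W, hW, hWV.tail hVZ⟩

theorem exists_head_rtg_parInt {M N : Tm} (h : ReflTransGen Beta M N) :
    ∃ P, ReflTransGen Head M P ∧ ReflTransGen ParInt P N := by
  induction h with
  | refl => exact ⟨M, .refl, .refl⟩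
  | tail _ hN ih =>
    obtain ⟨P, hMP, hP⟩ := ih
    obtain ⟨Q, hQ, hQN⟩ := hN.toPar.exists_head_parInt
    obtain ⟨P', hPP', hP'⟩ := rtg_parInt_postpone_head hP hQ
    exact ⟨P', hMP.trans hPP', hP'.tail hQN⟩

-- Ruling out coincidences of non-head steps with head steps (other than `I (I c) → I c`) amounts
-- to showing that certain equations `t[S/k] = C[t]` have no solution.
namespace Tm

def HasFreeVar : Tm → ℕ → Prop
  | var n, j => n = j
  | lam t, j => HasFreeVar t (j + 1)
  | app a b, j => HasFreeVar a j ∨ HasFreeVar b j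

def FreshBelow (S : Tm) (k : ℕ) : Prop := ∀ j < k, ¬ S.HasFreeVar j

theorem hasFreeVar_lift {S : Tm} {d j : ℕ} (h : (S.lift d).HasFreeVar j) :
    (j < d ∧ S.HasFreeVar j) ∨ (d < j ∧ S.HasFreeVar (j - 1)) := by
  induction S generalizing d j with
  | var n => grind [lift, HasFreeVar]
  | lam t ih => have := ih h; grind [HasFreeVar]
  | app a b iha ihb => grind [lift, HasFreeVar]

theorem freshBelow_zero (S : Tm) : S.FreshBelow 0 := fun _ hj => absurd hj (Nat.not_lt_zero _)

theorem FreshBelow.lift_zero {S : Tm} {k : ℕ} (hS : S.FreshBelow k) :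
    (S.lift 0).FreshBelow (k + 1) := fun j hj h => by
  rcases hasFreeVar_lift h with ⟨hj', _⟩ | ⟨hj', h⟩
  · omega
  · exact hS (j - 1) (by omega) h

theorem eq_of_var_subst_eq {n k : ℕ} {S X : Tm} (h : (var n).subst k S = X)
    (hX : ∀ m, X ≠ var m) : n = k ∧ S = X := by
  simp only [subst] at h
  split_ifs at h with hn
  · exact ⟨hn, h⟩
  all_goals exact absurd h.symm (hX _)

theorem FreshBelow.var_subst_ne {n k : ℕ} {S X : Tm} (hS : S.FreshBelow k) (hk : 0 < k)
    (hXv : ∀ m, X ≠ var m) (hX : n = k → X.HasFreeVar (k - 1)) :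
    (var n).subst k S ≠ X := by
  intro h
  obtain ⟨rfl, rfl⟩ := eq_of_var_subst_eq h hXv
  exact hS _ (by omega) (hX rfl)

-- For `k = 0` there is the solution `t = 0`, `S = (λ0) u`; freshness of `S` below `k` rules out
-- its analogue `t = k`.
theorem subst_ne_app_lam_self {k : ℕ} {S u : Tm} (hk : 0 < k) (hS : S.FreshBelow k) :
    ∀ t : Tm, t.subst k S ≠ app (lam t) u
  | var n => hS.var_subst_ne hk (by simp) (by simp only [HasFreeVar]; omega)
  | lam _ => by simp [subst]
  | app (var m) t₂ => by
    simp only [subst, ne_eq, app.injEq, not_and]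
    exact fun h => absurd h (hS.var_subst_ne hk (by simp) (by simp only [HasFreeVar]; omega))
  | app (lam C) t₂ => by
    simp only [subst, ne_eq, app.injEq, lam.injEq, not_and]
    exact fun h => absurd h (subst_ne_app_lam_self (Nat.succ_pos k) hS.lift_zero C)
  | app (app _ _) _ => by simp [subst]

theorem subst_ne_lam_app_self {k : ℕ} {S u : Tm} (hk : 0 < k) (hS : S.FreshBelow k) :
    ∀ t : Tm, t.subst k S ≠ lam (app t u)
  | var n => hS.var_subst_ne hk (by simp) (fun h => .inl (show n = k - 1 + 1 by omega))
  | lam D => by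
    simpa only [subst, ne_eq, lam.injEq] using
      subst_ne_app_lam_self (Nat.succ_pos k) hS.lift_zero D
  | app _ _ => by simp [subst]

theorem subst_lam_ne_lam_app_var_zero : ∀ (t : Tm) {t' : Tm} (d : ℕ) (S : Tm),
    Beta t t' → t.subst d (lam S) ≠ lam (app (var 0) t')
  | var _, _, _, _, h => absurd h Beta.not_var
  | app _ _, _, _, _, _ => by simp [subst]
  | lam t₁, _, d, S, h => by
    obtain ⟨t₁', rfl, h₁⟩ := h.lam_inv
    simp only [subst, ne_eq, lam.injEq]
    intro heq
    match t₁, h₁, heq with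
    | var _, h₁, _ => exact Beta.not_var h₁
    | lam _, _, heq => simp [subst] at heq
    | app u v, h₁, heq =>
      simp only [subst, app.injEq] at heq
      obtain ⟨hu, hv⟩ := heq
      have hu0 : u = var 0 := by
        match u, hu with
        | var m, hu => simp only [subst, lift] at hu; split_ifs at hu <;> grind
      subst hu0
      rcases h₁.app_inv with ⟨_, h0, _⟩ | ⟨_, _, h0⟩ | ⟨v', rfl, hv'⟩
      · cases h0
      · exact Beta.not_var h0
      · exact subst_lam_ne_lam_app_var_zero v (d + 1) (S.lift 1) hv' hv

theorem subst_ne_lam_app_of_nonHead : ∀ (t : Tm) {t' s S : Tm} {d : ℕ}, S.FreshBelow d →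
    Beta t t' → ¬ Head t t' → t.subst d S ≠ lam (app t' s)
  | var _, _, _, _, _, _, h, _ => absurd h Beta.not_var
  | app _ _, _, _, _, _, _, _, _ => by simp [subst]
  | lam C, _, _, _, d, hS, h, hnh => by
    obtain ⟨C', rfl, hC⟩ := h.lam_inv
    simp only [subst, ne_eq, lam.injEq]
    intro heq
    match C, hC, heq with
    | var _, hC, _ => exact Beta.not_var hC
    | lam _, _, heq => simp [subst] at heq
    | app C₁ C₂, hC, heq =>
      simp only [subst, app.injEq] at heq
      rcases hC.app_inv with ⟨E, rfl, rfl⟩ | ⟨C₁', rfl, hC₁⟩ | ⟨C₂', rfl, _⟩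
      · exact hnh (.lam (.beta E C₂))
      · exact subst_ne_lam_app_of_nonHead C₁ hS.lift_zero hC₁
          (fun hh => hnh (.lam (.appL hh))) heq.1
      · exact subst_ne_lam_app_self (Nat.succ_pos d) hS.lift_zero C₁ heq.1

theorem eq_var_zero_of_subst_eq_app_lam {B c c' : Tm} (heq : B.subst 0 c = app (lam B) c')
    (h : Beta c c') : B = var 0 := by
  match B, heq with
  | var n, heq =>
    obtain ⟨rfl, -⟩ := eq_of_var_subst_eq heq (by simp)
    rfl
  | lam _, heq => simp [subst] at heq
  | app B₁ B₂, heq =>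
    simp only [subst, app.injEq] at heq
    obtain ⟨h₁, h₂⟩ := heq
    exfalso
    match B₁, h₁ with
    | var m, h₁ =>
      obtain ⟨rfl, rfl⟩ := eq_of_var_subst_eq h₁ (by simp)
      obtain ⟨_, rfl, h'⟩ := h.lam_inv
      rcases h'.app_inv with ⟨_, h0, _⟩ | ⟨_, _, h0⟩ | ⟨B₂', rfl, hB₂⟩
      · cases h0
      · exact Beta.not_var h0
      · exact subst_lam_ne_lam_app_var_zero B₂ 0 _ hB₂ h₂
    | lam C, h₁ =>
      simp only [subst, lam.injEq] at h₁
      exact subst_ne_app_lam_self Nat.one_pos (freshBelow_zero c).lift_zero C h₁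
    | app _ _, h₁ => simp [subst] at h₁

theorem subst_ne_app_lam_of_nonHead {B B' : Tm} (A : Tm) (h : Beta B B') (hnh : ¬ Head B B') :
    B.subst 0 A ≠ app (lam B') A := by
  intro heq
  match B, h, hnh, heq with
  | var _, h, _, _ => exact Beta.not_var h
  | lam _, _, _, heq => simp [subst] at heq
  | app B₁ B₂, h, hnh, heq =>
    simp only [subst, app.injEq] at heq
    obtain ⟨h₁, h₂⟩ := heq
    rcases h.app_inv with ⟨E, rfl, rfl⟩ | ⟨B₁', rfl, hB₁⟩ | ⟨B₂', rfl, hB₂⟩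
    · exact hnh (.beta E B₂)
    · exact subst_ne_lam_app_of_nonHead B₁ (freshBelow_zero A) hB₁
        (fun hh => hnh (.appL hh)) h₁
    · match B₁, h₁ with
      | var m, h₁ =>
        obtain ⟨rfl, rfl⟩ := eq_of_var_subst_eq h₁ (by simp)
        exact subst_lam_ne_lam_app_var_zero B₂ 0 _ hB₂ h₂
      | lam D, h₁ =>
        simp only [subst, lam.injEq] at h₁
        exact subst_ne_app_lam_self Nat.one_pos (freshBelow_zero A).lift_zero D h₁
      | app _ _, h₁ => simp [subst] at h₁

end Tm

def NonHead (M N : Tm) : Prop := Beta M N ∧ ¬ Head M N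

abbrev Tm.I : Tm := lam (var 0)

theorem head_I_app (a : Tm) : Head (app Tm.I a) a := by
  simpa [Tm.subst] using Head.beta (var 0) a

theorem Head.eq_of_I_app {a t : Tm} (h : Head (app Tm.I a) t) : t = a := by
  rcases h.app_inv with ⟨_, h0, rfl⟩ | ⟨_, _, h0⟩
  · cases h0; simp [Tm.subst]
  · obtain ⟨_, _, h0⟩ := h0.lam_inv
    exact absurd h0 Head.not_var

theorem ParInt.eq_I {M : Tm} (h : ParInt M Tm.I) : M = Tm.I := by
  cases h with
  | lam h => cases h; rfl

theorem NonHead.lam {M N : Tm} (h : NonHead M N) : NonHead (.lam M) (.lam N) := by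
  refine ⟨.lam h.1, fun hh => ?_⟩
  obtain ⟨_, heq, hh⟩ := hh.lam_inv
  cases heq
  exact h.2 hh

theorem NonHead.appL {M N : Tm} (h : NonHead M N) (P : Tm) : NonHead (.app M P) (.app N P) := by
  refine ⟨.appL h.1, fun hh => ?_⟩
  rcases hh.app_inv with ⟨B, rfl, heq⟩ | ⟨_, heq, hh⟩
  · obtain ⟨B', rfl, hB⟩ := h.1.lam_inv
    exact Tm.subst_ne_app_lam_of_nonHead P hB (fun hh => h.2 (.lam hh)) heq.symm
  · cases heq
    exact h.2 hh

theorem NonHead.I_app {N N' : Tm} (h : NonHead N N') :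
    NonHead (app Tm.I N) (app Tm.I N') := by
  refine ⟨.appR h.1, fun hh => h.2 ?_⟩
  rw [← hh.eq_of_I_app]
  exact head_I_app N'

/-- Reducing the argument of a redex `(λB) c` coincides with contracting the redex only for
`B = 0`, i.e. for `I (I c') → I c'`. -/
theorem nonHead_appR {M N N' : Tm} (hM : M ≠ Tm.I) (h : Beta N N') (hne : N ≠ N') :
    NonHead (app M N) (app M N') := by
  refine ⟨.appR h, fun hh => ?_⟩
  rcases hh.app_inv with ⟨B, rfl, heq⟩ | ⟨_, heq, _⟩
  · exact hM (by rw [Tm.eq_var_zero_of_subst_eq_app_lam heq.symm h])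
  · cases heq
    exact hne rfl

theorem exists_head_nonHead_I_app {c V : Tm} (hc : ReflTransGen Head c V) {N : Tm}
    (hV : ReflTransGen NonHead V N) :
    ∃ U, ReflTransGen Head (app Tm.I c) U ∧ ReflTransGen NonHead U (app Tm.I N) := by
  induction hc using ReflTransGen.head_induction_on with
  | refl =>
    exact ⟨app Tm.I V, .refl, ReflTransGen.lift (app Tm.I) (fun _ _ => NonHead.I_app) _ _ hV⟩
  | @head a a₁ ha _ ih =>
    obtain ⟨U, hU, hUN⟩ := ih
    rcases ReflTransGen.cases_head hU with rfl | ⟨s, hs, hsU⟩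
    · by_cases haI : a = app Tm.I a₁
      · exact ⟨app Tm.I a₁, .single (haI ▸ head_I_app a), hUN⟩
      · refine ⟨app Tm.I a, .refl, .head ⟨.appR ha.toBeta, fun hh => haI ?_⟩ hUN⟩
        exact (hh.eq_of_I_app).symm
    · -- the head step `I a₁ →h a₁` is replaced by `I a →h a →h a₁`
      obtain rfl := hs.eq_of_I_app
      exact ⟨U, .head (head_I_app a) (.head ha hsU), hUN⟩

theorem ParInt.exists_head_nonHead {X Y : Tm} (h : ParInt X Y) :
    ∃ U, ReflTransGen Head X U ∧ ReflTransGen NonHead U Y := by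
  induction Y generalizing X with
  | var n => cases h; exact ⟨_, .refl, .refl⟩
  | lam M' ih =>
    cases h with | lam h =>
    obtain ⟨U, hU, hUM'⟩ := ih h
    exact ⟨.lam U, ReflTransGen.lift Tm.lam (fun _ _ => Head.lam) _ _ hU,
      ReflTransGen.lift Tm.lam (fun _ _ => NonHead.lam) _ _ hUM'⟩
  | app M' N' ihM ihN =>
    cases h with | @app M _ N _ hM hN =>
    obtain ⟨P, hNP, hP⟩ := hN.exists_head_parInt
    obtain ⟨V, hPV, hVN'⟩ := ihN hP
    by_cases hI : M' = Tm.I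
    · subst hI
      obtain rfl := hM.eq_I
      exact exists_head_nonHead_I_app (hNP.trans hPV) hVN'
    obtain ⟨U, hMU, hUM'⟩ := ihM hM
    refine ⟨.app U N, ReflTransGen.lift (Tm.app · N) (fun _ _ => Head.appL) _ _ hMU, ?_⟩
    have hL : ReflTransGen NonHead (.app U N) (.app M' N) :=
      ReflTransGen.lift (Tm.app · N) (fun _ _ h => h.appL N) _ _ hUM'
    have hR : ReflTransGen NonHead (.app M' N) (.app M' V) :=
      ReflTransGen.lift_of_ne (Tm.app M') (fun _ _ h => nonHead_appR hI h.toBeta)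
        (hNP.trans hPV)
    have hR' : ReflTransGen NonHead (.app M' V) (.app M' N') :=
      ReflTransGen.lift_of_ne (Tm.app M') (fun _ _ h => nonHead_appR hI h.1) hVN'
    exact hL.trans (hR.trans hR')

theorem rtg_parInt_exists_head_nonHead {X Y : Tm} (h : ReflTransGen ParInt X Y) :
    ∃ U, ReflTransGen Head X U ∧ ReflTransGen NonHead U Y := by
  induction h using ReflTransGen.head_induction_on with
  | refl => exact ⟨Y, .refl, .refl⟩
  | head hX _ ih =>
    obtain ⟨U, hU, hUY⟩ := ih
    obtain ⟨W, hW, hWU⟩ := hX.postpone_head hU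
    obtain ⟨V, hV, hVU⟩ := hWU.exists_head_nonHead
    exact ⟨V, hW.trans hV, hVU.trans hUY⟩

theorem exists_head_nonHead {M N : Tm} (h : ReflTransGen Beta M N) :
    ∃ U, ReflTransGen Head M U ∧ ReflTransGen NonHead U N := by
  obtain ⟨P, hMP, hPN⟩ := exists_head_rtg_parInt h
  obtain ⟨U, hPU, hUN⟩ := rtg_parInt_exists_head_nonHead hPN
  exact ⟨U, hMP.trans hPU, hUN⟩

def HasHead (M : Tm) : Prop := ∃ N, Head M N

inductive Neutral : Tm → Prop
  | var (n : ℕ) : Neutral (.var n)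
  | app {f a : Tm} : Neutral f → Neutral (.app f a)

theorem Neutral.not_head {M N : Tm} (hM : Neutral M) : ¬ Head M N := by
  intro h
  induction h with
  | beta => cases hM with | app h => cases h
  | lam => cases hM
  | appL _ ih => cases hM with | app h => exact ih h

theorem Neutral.beta {M N : Tm} (hM : Neutral M) (h : Beta M N) : Neutral N := by
  induction h with
  | beta => cases hM with | app h => cases h
  | lam => cases hM
  | appL _ ih => cases hM with | app h => exact .app (ih h)
  | appR => cases hM with | app h => exact .app h

theorem neutral_of_not_hasHead_app {f a : Tm} (h : ¬ HasHead (app f a)) : Neutral f := by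
  induction f generalizing a with
  | var n => exact .var n
  | lam B => exact absurd ⟨_, .beta B a⟩ h
  | app f₁ f₂ ih => exact .app (ih fun ⟨_, hf⟩ => h ⟨_, .appL hf⟩)

theorem NonHead.hasHead {M N : Tm} (h : NonHead M N) (hM : HasHead M) : HasHead N := by
  obtain ⟨hβ, hnh⟩ := h
  obtain ⟨S, hS⟩ := hM
  induction hβ generalizing S with
  | beta M N => exact absurd (.beta M N) hnh
  | lam _ ih =>
    obtain ⟨_, _, hs⟩ := hS.lam_inv
    obtain ⟨_, ht⟩ := ih (fun hh => hnh (.lam hh)) _ hs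
    exact ⟨_, .lam ht⟩
  | @appL _ _ P hβ ih =>
    rcases hS.app_inv with ⟨_, rfl, _⟩ | ⟨_, _, hs⟩
    · obtain ⟨B', rfl, _⟩ := hβ.lam_inv
      exact ⟨_, .beta B' P⟩
    · obtain ⟨_, ht⟩ := ih (fun hh => hnh (.appL hh)) _ hs
      exact ⟨_, .appL ht⟩
  | @appR _ _ P' =>
    rcases hS.app_inv with ⟨B, rfl, _⟩ | ⟨_, _, hs⟩
    · exact ⟨_, .beta B P'⟩
    · exact ⟨_, .appL hs⟩

def NonUnb (M N : Tm) : Prop := Beta M N ∧ ¬ Unb M N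

theorem Unb.toBeta {M N : Tm} (h : Unb M N) : Beta M N := by
  induction h with
  | head h => exact h.toBeta
  | lam _ _ ih => exact .lam ih
  | appL _ _ ih => exact .appL ih
  | appR _ _ ih => exact .appR ih

theorem Unb.head_of_hasHead {M N : Tm} (h : Unb M N) (hM : HasHead M) : Head M N := by
  obtain ⟨S, hS⟩ := hM
  cases h with
  | head h => exact h
  | lam hnh _ | appL hnh _ | appR hnh _ => exact absurd hS (hnh S)

theorem rtg_nonUnb_of_hasHead {M N : Tm} (h : ReflTransGen NonHead M N) (hM : HasHead M) :
    ReflTransGen NonUnb M N := by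
  induction h using ReflTransGen.head_induction_on with
  | refl => exact .refl
  | head hM' _ ih =>
    exact .head ⟨hM'.1, fun hu => hM'.2 (hu.head_of_hasHead hM)⟩ (ih (hM'.hasHead hM))

theorem Unb.lam_congr {M N : Tm} (h : Unb M N) : Unb (.lam M) (.lam N) := by
  by_cases hM : HasHead M
  · exact .head (.lam (h.head_of_hasHead hM))
  · refine .lam (fun _ hs => ?_) h
    obtain ⟨_, _, hs⟩ := hs.lam_inv
    exact hM ⟨_, hs⟩

theorem Unb.lam_inv {M N : Tm} (h : Unb (.lam M) (.lam N)) : Unb M N := by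
  cases h with
  | head h =>
    obtain ⟨_, heq, h⟩ := h.lam_inv
    cases heq
    exact .head h
  | lam _ h => exact h

theorem NonUnb.lam {M N : Tm} (h : NonUnb M N) : NonUnb (.lam M) (.lam N) :=
  ⟨.lam h.1, fun hu => h.2 hu.lam_inv⟩

theorem Unb.appL_of_neutral {M N : Tm} (hM : Neutral M) (h : Unb M N) (P : Tm) :
    Unb (.app M P) (.app N P) :=
  .appL (fun _ hh => (Neutral.app hM).not_head hh) h

theorem Unb.appR_of_neutral {P N N' : Tm} (hP : Neutral P) (h : Unb N N') :
    Unb (.app P N) (.app P N') :=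
  .appR (fun _ hh => (Neutral.app hP).not_head hh) h

theorem Unb.app_inv {f a t : Tm} (h : Unb (.app f a) t) :
    Head (.app f a) t ∨ (∃ f', t = .app f' a ∧ Unb f f') ∨ (∃ a', t = .app f a' ∧ Unb a a') := by
  cases h with
  | head h => exact .inl h
  | appL _ h => exact .inr (.inl ⟨_, rfl, h⟩)
  | appR _ h => exact .inr (.inr ⟨_, rfl, h⟩)

theorem NonUnb.appL_of_neutral {M N : Tm} (hM : Neutral M) (h : NonUnb M N) (hne : M ≠ N)
    (P : Tm) : NonUnb (.app M P) (.app N P) := by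
  refine ⟨.appL h.1, fun hu => ?_⟩
  rcases hu.app_inv with hh | ⟨_, heq, hu⟩ | ⟨_, heq, _⟩
  · exact (Neutral.app hM).not_head hh
  · cases heq; exact h.2 hu
  · cases heq; exact hne rfl

theorem NonUnb.appR_of_neutral {P N N' : Tm} (hP : Neutral P) (h : NonUnb N N')
    (hne : N ≠ N') : NonUnb (.app P N) (.app P N') := by
  refine ⟨.appR h.1, fun hu => ?_⟩
  rcases hu.app_inv with hh | ⟨_, heq, _⟩ | ⟨_, heq, hu⟩
  · exact (Neutral.app hP).not_head hh
  · cases heq; exact hne rfl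
  · cases heq; exact h.2 hu

theorem Neutral.rtg_beta {M N : Tm} (hM : Neutral M) (h : ReflTransGen Beta M N) :
    Neutral N := by
  induction h with
  | refl => exact hM
  | tail _ h ih => exact ih.beta h

theorem rtg_beta_lam_inv {M N : Tm} (h : ReflTransGen Beta (.lam M) N) :
    ∃ N₀, N = .lam N₀ ∧ ReflTransGen Beta M N₀ := by
  induction h with
  | refl => exact ⟨M, rfl, .refl⟩
  | tail _ h ih =>
    obtain ⟨N₀, rfl, hN₀⟩ := ih
    obtain ⟨N₁, rfl, h₀⟩ := h.lam_inv
    exact ⟨N₁, rfl, hN₀.tail h₀⟩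

theorem rtg_beta_app_inv_of_neutral {f a N : Tm} (hf : Neutral f)
    (h : ReflTransGen Beta (.app f a) N) :
    ∃ f' a', N = .app f' a' ∧ ReflTransGen Beta f f' ∧ ReflTransGen Beta a a' := by
  induction h with
  | refl => exact ⟨f, a, rfl, .refl, .refl⟩
  | tail _ h ih =>
    obtain ⟨f', a', rfl, hf', ha'⟩ := ih
    rcases h.app_inv with ⟨_, rfl, _⟩ | ⟨f'', rfl, hf''⟩ | ⟨a'', rfl, ha''⟩
    · cases hf.rtg_beta hf'
    · exact ⟨f'', a', rfl, hf'.tail hf'', ha'⟩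
    · exact ⟨f', a'', rfl, hf', ha'.tail ha''⟩

theorem rtg_unb_app_of_neutral {X₁ U₁ X₂ U₂ : Tm} (hX₁ : Neutral X₁)
    (h₁ : ReflTransGen Unb X₁ U₁) (h₂ : ReflTransGen Unb X₂ U₂) :
    ReflTransGen Unb (.app X₁ X₂) (.app U₁ U₂) := by
  have hU₁ : Neutral U₁ := hX₁.rtg_beta (ReflTransGen.mono (fun _ _ => Unb.toBeta) _ _ h₁)
  have hL : ReflTransGen Unb (.app X₁ X₂) (.app U₁ X₂) :=
    ReflTransGen.lift_of_ne_of_invariant (Tm.app · X₂) (fun _ _ h hM => hM.beta h.toBeta)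
      (fun _ _ h hM _ => h.appL_of_neutral hM X₂) h₁ hX₁
  exact hL.trans (ReflTransGen.lift (Tm.app U₁) (fun _ _ => Unb.appR_of_neutral hU₁) _ _ h₂)

theorem rtg_nonUnb_app_of_neutral {U₁ N₁ U₂ N₂ : Tm} (hU₁ : Neutral U₁)
    (h₁ : ReflTransGen NonUnb U₁ N₁) (h₂ : ReflTransGen NonUnb U₂ N₂) :
    ReflTransGen NonUnb (.app U₁ U₂) (.app N₁ N₂) := by
  have hR : ReflTransGen NonUnb (.app U₁ U₂) (.app U₁ N₂) :=
    ReflTransGen.lift_of_ne (Tm.app U₁) (fun _ _ h hne => h.appR_of_neutral hU₁ hne) h₂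
  exact hR.trans (ReflTransGen.lift_of_ne_of_invariant (Tm.app · N₂) (fun _ _ h hM => hM.beta h.1)
    (fun _ _ h hM hne => h.appL_of_neutral hM hne N₂) h₁ hU₁)

def UnbFactorizes (N : Tm) : Prop :=
  ∀ M, ReflTransGen Beta M N → ∃ U, ReflTransGen Unb M U ∧ ReflTransGen NonUnb U N

theorem unbFactorizes_of_not_hasHead {N : Tm}
    (h : ∀ X, ¬ HasHead X → ReflTransGen Beta X N →
      ∃ U, ReflTransGen Unb X U ∧ ReflTransGen NonUnb U N) :
    UnbFactorizes N := by
  intro M hMN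
  obtain ⟨U, hMU, hUN⟩ := exists_head_nonHead hMN
  have hMU' : ReflTransGen Unb M U := ReflTransGen.mono (fun _ _ => Unb.head) _ _ hMU
  by_cases hU : HasHead U
  · exact ⟨U, hMU', rtg_nonUnb_of_hasHead hUN hU⟩
  · obtain ⟨V, hUV, hVN⟩ := h U hU (ReflTransGen.mono (fun _ _ h => h.1) _ _ hUN)
    exact ⟨V, hMU'.trans hUV, hVN⟩

theorem unbFactorizes_var (n : ℕ) : UnbFactorizes (.var n) := by
  refine unbFactorizes_of_not_hasHead fun X hX hXN => ?_
  cases X with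
  | var m =>
    cases (reflTransGen_iff_eq fun _ => Beta.not_var).1 hXN
    exact ⟨_, .refl, .refl⟩
  | lam X₀ => obtain ⟨_, ⟨⟩, _⟩ := rtg_beta_lam_inv hXN
  | app X₁ X₂ =>
    obtain ⟨_, _, ⟨⟩, _⟩ := rtg_beta_app_inv_of_neutral (neutral_of_not_hasHead_app hX) hXN

theorem UnbFactorizes.lam {N : Tm} (hN : UnbFactorizes N) : UnbFactorizes (.lam N) := by
  refine unbFactorizes_of_not_hasHead fun X hX hXN => ?_
  cases X with
  | var m => cases (reflTransGen_iff_eq fun _ => Beta.not_var).1 hXN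
  | app X₁ X₂ =>
    obtain ⟨_, _, ⟨⟩, _⟩ := rtg_beta_app_inv_of_neutral (neutral_of_not_hasHead_app hX) hXN
  | lam X₀ =>
    obtain ⟨_, ⟨⟩, hX₀⟩ := rtg_beta_lam_inv hXN
    obtain ⟨U, hXU, hUN⟩ := hN X₀ hX₀
    exact ⟨.lam U, ReflTransGen.lift Tm.lam (fun _ _ => Unb.lam_congr) _ _ hXU,
      ReflTransGen.lift Tm.lam (fun _ _ => NonUnb.lam) _ _ hUN⟩

theorem UnbFactorizes.app {N₁ N₂ : Tm} (hN₁ : UnbFactorizes N₁) (hN₂ : UnbFactorizes N₂) :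
    UnbFactorizes (.app N₁ N₂) := by
  refine unbFactorizes_of_not_hasHead fun X hX hXN => ?_
  cases X with
  | var m => cases (reflTransGen_iff_eq fun _ => Beta.not_var).1 hXN
  | lam X₀ => obtain ⟨_, ⟨⟩, _⟩ := rtg_beta_lam_inv hXN
  | app X₁ X₂ =>
    have hX₁ := neutral_of_not_hasHead_app hX
    obtain ⟨_, _, ⟨⟩, h₁, h₂⟩ := rtg_beta_app_inv_of_neutral hX₁ hXN
    obtain ⟨U₁, hXU₁, hUN₁⟩ := hN₁ X₁ h₁
    obtain ⟨U₂, hXU₂, hUN₂⟩ := hN₂ X₂ h₂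
    have hU₁ : Neutral U₁ := hX₁.rtg_beta (ReflTransGen.mono (fun _ _ => Unb.toBeta) _ _ hXU₁)
    exact ⟨.app U₁ U₂, rtg_unb_app_of_neutral hX₁ hXU₁ hXU₂,
      rtg_nonUnb_app_of_neutral hU₁ hUN₁ hUN₂⟩

theorem unbFactorizes : ∀ N : Tm, UnbFactorizes N
  | .var n => unbFactorizes_var n
  | .lam N => (unbFactorizes N).lam
  | .app N₁ N₂ => (unbFactorizes N₁).app (unbFactorizes N₂)

/-- **Unbiased-strategy factorization for Call-by-Name**: if `M →β* N` then there is a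
term `U` with `M ⊳* U` and `U ⋫* N`, where `⋫` is a β-step which is not a `⊳`-step. -/
theorem cbn_unbiased_factorization (M N : Tm) (h : Relation.ReflTransGen Beta M N) :
    ∃ U : Tm, Relation.ReflTransGen Unb M U ∧
      Relation.ReflTransGen (fun a b => Beta a b ∧ ¬ Unb a b) U N :=
  unbFactorizes N M h
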